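/- arXiv:2402.03883 — 4 statements merged into one kernel-verified Lean document; each statement's English description precedes it below -/
import Mathlib

section
/- In the Euclidean bilevel setting, assume ‖∇²_{yx} g(x,y)‖ ≤ L for all (x,y), that for every y the map x ↦ ∇_y g(x,y) is L-Lipschitz, and that the operator-valued maps (x,y) ↦ ∇²_{yy} g(x,y) and (x,y) ↦ ∇²_{yx} g(x,y) are ρ-Lipschitz in operator norm in each variable separately. Define T(x) := (∇²_{yy} g(x, y*(x)))⁻¹ ∘ ∇²_{yx} g(x, y*(x)) : H₁ → H₂ (which equals −D y*(x)). Then ‖T(x)‖ ≤ L/μ for every x, and T is Lipschitz in x: ‖T(x₁) − T(x₂)‖ ≤ (L²ρ/μ³ + 2Lρ/μ² + ρ/μ) ‖x₁ − x₂‖ for all x₁, x₂ ∈ H₁. -/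
/-! Strong convexity makes `∇_y g(x, ·)` strongly monotone (mean value theorem along a segment),
which gives both `‖(∇²_{yy} g)⁻¹‖ ≤ 1/μ` and the `L/μ`-Lipschitz continuity of `y*`. Along the
curve `x ↦ (x, y*(x))` the blocks `B = ∇²_{yy} g` and `A = ∇²_{yx} g` are then
`ρ(1 + L/μ)`-Lipschitz, and the identities `B₁⁻¹ - B₂⁻¹ = B₁⁻¹ (B₂ - B₁) B₂⁻¹` and
`B₁⁻¹A₁ - B₂⁻¹A₂ = B₁⁻¹(A₁ - A₂) + (B₁⁻¹ - B₂⁻¹)A₂` give the Lipschitz constant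
`(ρ/μ)(1 + L/μ)²` of `T`. -/

open scoped RealInnerProductSpace

variable {H₁ : Type*} [NormedAddCommGroup H₁] [InnerProductSpace ℝ H₁] [FiniteDimensional ℝ H₁]
variable {H₂ : Type*} [NormedAddCommGroup H₂] [InnerProductSpace ℝ H₂] [FiniteDimensional ℝ H₂]

/-- Partial gradient of a bifunction in the first variable: `∇ₓ f (x, y)`. -/
noncomputable def gradx (f : H₁ → H₂ → ℝ) (x : H₁) (y : H₂) : H₁ :=
  gradient (fun x' => f x' y) x

/-- Partial gradient of a bifunction in the second variable: `∇_y f (x, y)`. -/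
noncomputable def grady (f : H₁ → H₂ → ℝ) (x : H₁) (y : H₂) : H₂ :=
  gradient (fun y' => f x y') y

/-- Partial Hessian `∇²_{yy} g(x,y)`, a continuous linear operator on `H₂`. -/
noncomputable def hessyy (g : H₁ → H₂ → ℝ) (x : H₁) (y : H₂) : H₂ →L[ℝ] H₂ :=
  fderiv ℝ (fun y' => grady g x y') y

/-- Cross derivative `∇²_{yx} g(x,y) : H₁ → H₂`, the derivative in `x` of `∇_y g`. -/
noncomputable def hessyx (g : H₁ → H₂ → ℝ) (x : H₁) (y : H₂) : H₁ →L[ℝ] H₂ :=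
  fderiv ℝ (fun x' => grady g x' y) x

/-- Cross derivative `∇²_{xy} g(x,y) : H₂ → H₁`, the adjoint of `∇²_{yx} g(x,y)`. -/
noncomputable def hessxy (g : H₁ → H₂ → ℝ) (x : H₁) (y : H₂) : H₂ →L[ℝ] H₁ :=
  ContinuousLinearMap.adjoint (hessyx g x y)

theorem mul_norm_le_norm_of_mul_norm_sq_le_inner {E : Type*} [NormedAddCommGroup E]
    [InnerProductSpace ℝ E] {μ : ℝ} {u v : E} (h : μ * ‖v‖ ^ 2 ≤ ⟪u, v⟫) : μ * ‖v‖ ≤ ‖u‖ := by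
  rcases (norm_nonneg v).eq_or_lt with hv | hv
  · rw [← hv, mul_zero]
    exact norm_nonneg u
  · refine le_of_mul_le_mul_right ?_ hv
    calc μ * ‖v‖ * ‖v‖ = μ * ‖v‖ ^ 2 := by ring
      _ ≤ ‖u‖ * ‖v‖ := h.trans (real_inner_le_norm u v)

theorem mul_norm_sq_le_inner_sub_of_hasFDerivAt {E : Type*} [NormedAddCommGroup E]
    [InnerProductSpace ℝ E] {f : E → E} {f' : E → E →L[ℝ] E} {μ : ℝ}
    (hf : ∀ y, HasFDerivAt f (f' y) y) (hf' : ∀ y v, μ * ‖v‖ ^ 2 ≤ ⟪f' y v, v⟫) (y₁ y₂ : E) :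
    μ * ‖y₁ - y₂‖ ^ 2 ≤ ⟪f y₁ - f y₂, y₁ - y₂⟫ := by
  set d := y₁ - y₂
  have hline : ∀ t : ℝ, HasDerivAt (fun t : ℝ => y₂ + t • d) d t := fun t => by
    simpa using ((hasDerivAt_id t).smul_const d).const_add y₂
  have hG : ∀ t : ℝ, HasDerivAt (fun t : ℝ => ⟪f (y₂ + t • d), d⟫) ⟪f' (y₂ + t • d) d, d⟫ t :=
    fun t => by simpa using ((hf _).comp_hasDerivAt t (hline t)).inner ℝ (hasDerivAt_const t d)
  obtain ⟨t, -, ht⟩ := exists_hasDerivAt_eq_slope _ _ zero_lt_one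
    (fun t _ => (hG t).continuousAt.continuousWithinAt) (fun t _ => hG t)
  have hy₁ : y₂ + (1 : ℝ) • d = y₁ := by simp [d]
  rw [hy₁, zero_smul, add_zero, sub_zero, div_one, ← inner_sub_left] at ht
  exact ht ▸ hf' _ d

theorem norm_sub_le_of_strongMonotone_of_lipschitz {X E : Type*} [SeminormedAddCommGroup X]
    [NormedAddCommGroup E] [InnerProductSpace ℝ E] {F : X → E → E} {φ : X → E} {μ L : ℝ}
    (hmono : ∀ x y₁ y₂, μ * ‖y₁ - y₂‖ ^ 2 ≤ ⟪F x y₁ - F x y₂, y₁ - y₂⟫)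
    (hlip : ∀ y x₁ x₂, ‖F x₁ y - F x₂ y‖ ≤ L * ‖x₁ - x₂‖) (hφ : ∀ x, F x (φ x) = 0)
    (x₁ x₂ : X) : μ * ‖φ x₁ - φ x₂‖ ≤ L * ‖x₁ - x₂‖ := by
  have h := mul_norm_le_norm_of_mul_norm_sq_le_inner (hmono x₁ (φ x₁) (φ x₂))
  rw [hφ x₁, zero_sub, norm_neg, ← sub_zero (F x₁ (φ x₂)), ← hφ x₂] at h
  exact h.trans (hlip _ _ _)

theorem norm_sub_le_of_separately_lipschitz {X Y Z : Type*} [SeminormedAddCommGroup X]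
    [SeminormedAddCommGroup Y] [SeminormedAddCommGroup Z] {h : X → Y → Z} {φ : X → Y}
    {ρ c : ℝ} (hρ : 0 ≤ ρ) (hx : ∀ y x₁ x₂, ‖h x₁ y - h x₂ y‖ ≤ ρ * ‖x₁ - x₂‖)
    (hy : ∀ x y₁ y₂, ‖h x y₁ - h x y₂‖ ≤ ρ * ‖y₁ - y₂‖)
    (hφ : ∀ x₁ x₂, ‖φ x₁ - φ x₂‖ ≤ c * ‖x₁ - x₂‖) (x₁ x₂ : X) :
    ‖h x₁ (φ x₁) - h x₂ (φ x₂)‖ ≤ (ρ + ρ * c) * ‖x₁ - x₂‖ :=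
  calc ‖h x₁ (φ x₁) - h x₂ (φ x₂)‖
      ≤ ‖h x₁ (φ x₁) - h x₂ (φ x₁)‖ + ‖h x₂ (φ x₁) - h x₂ (φ x₂)‖ :=
        norm_sub_le_norm_sub_add_norm_sub _ _ _
    _ ≤ ρ * ‖x₁ - x₂‖ + ρ * (c * ‖x₁ - x₂‖) :=
      add_le_add (hx _ _ _) ((hy _ _ _).trans (mul_le_mul_of_nonneg_left (hφ _ _) hρ))
    _ = (ρ + ρ * c) * ‖x₁ - x₂‖ := by ring

theorem ContinuousLinearMap.opNorm_le_inv_of_comp_eq_id {𝕜 E F : Type*}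
    [NontriviallyNormedField 𝕜] [NormedAddCommGroup E] [NormedSpace 𝕜 E]
    [NormedAddCommGroup F] [NormedSpace 𝕜 F] {A : F →L[𝕜] E} {R : E →L[𝕜] F} {μ : ℝ}
    (hμ : 0 < μ) (hA : ∀ v, μ * ‖v‖ ≤ ‖A v‖) (hAR : A.comp R = ContinuousLinearMap.id 𝕜 E) :
    ‖R‖ ≤ μ⁻¹ := by
  refine opNorm_le_bound R (inv_nonneg.2 hμ.le) fun w => ?_
  have hARw : A (R w) = w := by rw [← comp_apply, hAR, id_apply]
  rw [inv_mul_eq_div, le_div_iff₀ hμ, mul_comm]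
  simpa only [hARw] using hA (R w)

theorem norm_invOf_sub_invOf_le {R : Type*} [NormedRing R] (a b : R) [Invertible a]
    [Invertible b] : ‖⅟a - ⅟b‖ ≤ ‖⅟a‖ * ‖b - a‖ * ‖⅟b‖ := by
  rw [invOf_sub_invOf]
  exact norm_mul₃_le

theorem ContinuousLinearMap.norm_comp_sub_comp_le {𝕜 E F G : Type*}
    [NontriviallyNormedField 𝕜] [NormedAddCommGroup E] [NormedSpace 𝕜 E]
    [NormedAddCommGroup F] [NormedSpace 𝕜 F] [NormedAddCommGroup G] [NormedSpace 𝕜 G]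
    (R₁ R₂ : F →L[𝕜] G) (A₁ A₂ : E →L[𝕜] F) :
    ‖R₁.comp A₁ - R₂.comp A₂‖ ≤ ‖R₁‖ * ‖A₁ - A₂‖ + ‖R₁ - R₂‖ * ‖A₂‖ := by
  have h : R₁.comp A₁ - R₂.comp A₂ = R₁.comp (A₁ - A₂) + (R₁ - R₂).comp A₂ := by
    rw [comp_sub, sub_comp]
    abel
  rw [h]
  exact (norm_add_le _ _).trans (add_le_add (opNorm_comp_le _ _) (opNorm_comp_le _ _))

theorem hasFDerivAt_grady {E F : Type*} [NormedAddCommGroup E] [InnerProductSpace ℝ E]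
    [FiniteDimensional ℝ E] [NormedAddCommGroup F] [InnerProductSpace ℝ F]
    [FiniteDimensional ℝ F] {g : E → F → ℝ}
    (hg : ContDiff ℝ 2 fun p : E × F => g p.1 p.2) (x : E) (y : F) :
    HasFDerivAt (grady g x) (hessyy g x y) y := by
  have hgx : ContDiff ℝ 2 (g x) := hg.comp (contDiff_const.prodMk contDiff_id)
  have : ContDiff ℝ 1 (grady g x) :=
    (InnerProductSpace.toDual ℝ F).symm.contDiff.comp (hgx.fderiv_right le_rfl)
  exact (this.differentiable one_ne_zero y).hasFDerivAt

theorem statement3_general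
    (g : H₁ → H₂ → ℝ) (μ L ρ : ℝ) (hμ : 0 < μ) (hL : 0 ≤ L) (hρ : 0 ≤ ρ)
    (hg : ContDiff ℝ 2 fun p : H₁ × H₂ => g p.1 p.2)
    -- `∇²_{yy} g(x,y) ⪰ μ · id` for all `(x,y)`
    (hpos : ∀ (x : H₁) (y v : H₂), μ * ‖v‖ ^ 2 ≤ ⟪hessyy g x y v, v⟫)
    -- `‖∇²_{yx} g(x,y)‖ ≤ L` for all `(x,y)`
    (hyxbd : ∀ (x : H₁) (y : H₂), ‖hessyx g x y‖ ≤ L)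
    -- `x ↦ ∇_y g(x,y)` is `L`-Lipschitz for every `y`
    (hlipx : ∀ (y : H₂) (x₁ x₂ : H₁), ‖grady g x₁ y - grady g x₂ y‖ ≤ L * ‖x₁ - x₂‖)
    -- `(x,y) ↦ ∇²_{yy} g(x,y)` is `ρ`-Lipschitz in operator norm in each variable
    (hyyLx : ∀ (y : H₂) (x₁ x₂ : H₁), ‖hessyy g x₁ y - hessyy g x₂ y‖ ≤ ρ * ‖x₁ - x₂‖)
    (hyyLy : ∀ (x : H₁) (y₁ y₂ : H₂), ‖hessyy g x y₁ - hessyy g x y₂‖ ≤ ρ * ‖y₁ - y₂‖)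
    -- `(x,y) ↦ ∇²_{yx} g(x,y)` is `ρ`-Lipschitz in operator norm in each variable
    (hyxLx : ∀ (y : H₂) (x₁ x₂ : H₁), ‖hessyx g x₁ y - hessyx g x₂ y‖ ≤ ρ * ‖x₁ - x₂‖)
    (hyxLy : ∀ (x : H₁) (y₁ y₂ : H₂), ‖hessyx g x y₁ - hessyx g x y₂‖ ≤ ρ * ‖y₁ - y₂‖)
    -- `y*(x)` is the (unique) minimizer of `g(x, ·)`, characterized by `∇_y g(x, y*(x)) = 0`
    (ystar : H₁ → H₂)
    (hstat : ∀ x : H₁, grady g x (ystar x) = 0)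
    -- `Hinv x` is the inverse of `∇²_{yy} g(x, y*(x))`
    (Hinv : H₁ → H₂ →L[ℝ] H₂)
    (hHinv1 : ∀ x : H₁, (Hinv x).comp (hessyy g x (ystar x)) = ContinuousLinearMap.id ℝ H₂)
    (hHinv2 : ∀ x : H₁, (hessyy g x (ystar x)).comp (Hinv x) = ContinuousLinearMap.id ℝ H₂)
    -- `T(x) := (∇²_{yy} g(x, y*(x)))⁻¹ ∘ ∇²_{yx} g(x, y*(x))`
    (T : H₁ → H₁ →L[ℝ] H₂)
    (hT : ∀ x : H₁, T x = (Hinv x).comp (hessyx g x (ystar x))) :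
    (∀ x : H₁, ‖T x‖ ≤ L / μ) ∧
      ∀ x₁ x₂ : H₁,
        ‖T x₁ - T x₂‖ ≤ (L ^ 2 * ρ / μ ^ 3 + 2 * L * ρ / μ ^ 2 + ρ / μ) * ‖x₁ - x₂‖ := by
  have hHinv : ∀ x, ‖Hinv x‖ ≤ μ⁻¹ := fun x =>
    ContinuousLinearMap.opNorm_le_inv_of_comp_eq_id hμ
      (fun v => mul_norm_le_norm_of_mul_norm_sq_le_inner (hpos x _ v)) (hHinv2 x)
  have hystar : ∀ x₁ x₂, ‖ystar x₁ - ystar x₂‖ ≤ L / μ * ‖x₁ - x₂‖ := fun x₁ x₂ => by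
    rw [div_mul_eq_mul_div, le_div_iff₀ hμ, mul_comm]
    exact norm_sub_le_of_strongMonotone_of_lipschitz
      (fun x => mul_norm_sq_le_inner_sub_of_hasFDerivAt (hasFDerivAt_grady hg x) (hpos x)) hlipx
      hstat x₁ x₂
  set K := ρ + ρ * (L / μ) with hK
  have hyx := norm_sub_le_of_separately_lipschitz hρ hyxLx hyxLy hystar
  have hyy := norm_sub_le_of_separately_lipschitz hρ hyyLx hyyLy hystar
  refine ⟨fun x => ?_, fun x₁ x₂ => ?_⟩
  · rw [hT, ← inv_mul_eq_div]
    exact (ContinuousLinearMap.opNorm_comp_le _ _).trans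
      (mul_le_mul (hHinv x) (hyxbd x _) (norm_nonneg _) (by positivity))
  -- `⅟(hessyy g x (ystar x))` unfolds to `Hinv x`
  let _ : ∀ x, Invertible (hessyy g x (ystar x)) := fun x => ⟨Hinv x, hHinv1 x, hHinv2 x⟩
  have hHinv_sub : ‖Hinv x₁ - Hinv x₂‖ ≤ μ⁻¹ * (K * ‖x₁ - x₂‖) * μ⁻¹ := by
    refine (norm_invOf_sub_invOf_le (hessyy g x₁ (ystar x₁)) (hessyy g x₂ (ystar x₂))).trans ?_
    rw [norm_sub_rev]
    gcongr
    exacts [hHinv x₁, hyy x₁ x₂, hHinv x₂]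
  calc ‖T x₁ - T x₂‖
      ≤ ‖Hinv x₁‖ * ‖hessyx g x₁ (ystar x₁) - hessyx g x₂ (ystar x₂)‖
          + ‖Hinv x₁ - Hinv x₂‖ * ‖hessyx g x₂ (ystar x₂)‖ := by
        rw [hT, hT]
        exact ContinuousLinearMap.norm_comp_sub_comp_le _ _ _ _
    _ ≤ μ⁻¹ * (K * ‖x₁ - x₂‖) + μ⁻¹ * (K * ‖x₁ - x₂‖) * μ⁻¹ * L := by
        gcongr
        exacts [hHinv x₁, hyx x₁ x₂, hyxbd x₂ _]
    _ = (L ^ 2 * ρ / μ ^ 3 + 2 * L * ρ / μ ^ 2 + ρ / μ) * ‖x₁ - x₂‖ := by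
        rw [hK]
        field_simp
        ring

/-- In the Euclidean bilevel setting, with `‖∇²_{yx} g‖ ≤ L`, `x ↦ ∇_y g(x,y)`
`L`-Lipschitz, and `∇²_{yy} g`, `∇²_{yx} g` `ρ`-Lipschitz in operator norm in each variable,
the operator `T(x) := (∇²_{yy} g(x, y*(x)))⁻¹ ∘ ∇²_{yx} g(x, y*(x))` (`= −D y*(x)`) satisfies
`‖T(x)‖ ≤ L/μ` and `‖T(x₁) − T(x₂)‖ ≤ (L²ρ/μ³ + 2Lρ/μ² + ρ/μ) ‖x₁ − x₂‖`. -/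
theorem statement3
    (g : H₁ → H₂ → ℝ) (μ L ρ : ℝ) (hμ : 0 < μ) (hL : 0 ≤ L) (hρ : 0 ≤ ρ)
    (hg : ContDiff ℝ 2 fun p : H₁ × H₂ => g p.1 p.2)
    -- `∇²_{yy} g(x,y) ⪰ μ · id` for all `(x,y)`
    (hpos : ∀ (x : H₁) (y v : H₂), μ * ‖v‖ ^ 2 ≤ ⟪hessyy g x y v, v⟫)
    -- `‖∇²_{yx} g(x,y)‖ ≤ L` for all `(x,y)`
    (hyxbd : ∀ (x : H₁) (y : H₂), ‖hessyx g x y‖ ≤ L)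
    -- `x ↦ ∇_y g(x,y)` is `L`-Lipschitz for every `y`
    (hlipx : ∀ (y : H₂) (x₁ x₂ : H₁), ‖grady g x₁ y - grady g x₂ y‖ ≤ L * ‖x₁ - x₂‖)
    -- `(x,y) ↦ ∇²_{yy} g(x,y)` is `ρ`-Lipschitz in operator norm in each variable
    (hyyLx : ∀ (y : H₂) (x₁ x₂ : H₁), ‖hessyy g x₁ y - hessyy g x₂ y‖ ≤ ρ * ‖x₁ - x₂‖)
    (hyyLy : ∀ (x : H₁) (y₁ y₂ : H₂), ‖hessyy g x y₁ - hessyy g x y₂‖ ≤ ρ * ‖y₁ - y₂‖)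
    -- `(x,y) ↦ ∇²_{yx} g(x,y)` is `ρ`-Lipschitz in operator norm in each variable
    (hyxLx : ∀ (y : H₂) (x₁ x₂ : H₁), ‖hessyx g x₁ y - hessyx g x₂ y‖ ≤ ρ * ‖x₁ - x₂‖)
    (hyxLy : ∀ (x : H₁) (y₁ y₂ : H₂), ‖hessyx g x y₁ - hessyx g x y₂‖ ≤ ρ * ‖y₁ - y₂‖)
    -- `y*(x)` is the (unique) minimizer of `g(x, ·)`, characterized by `∇_y g(x, y*(x)) = 0`
    (ystar : H₁ → H₂)
    (hmin : ∀ (x : H₁) (z : H₂), g x (ystar x) ≤ g x z)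
    (hstat : ∀ x : H₁, grady g x (ystar x) = 0)
    -- `Hinv x` is the inverse of `∇²_{yy} g(x, y*(x))`
    (Hinv : H₁ → H₂ →L[ℝ] H₂)
    (hHinv1 : ∀ x : H₁, (Hinv x).comp (hessyy g x (ystar x)) = ContinuousLinearMap.id ℝ H₂)
    (hHinv2 : ∀ x : H₁, (hessyy g x (ystar x)).comp (Hinv x) = ContinuousLinearMap.id ℝ H₂)
    -- `T(x) := (∇²_{yy} g(x, y*(x)))⁻¹ ∘ ∇²_{yx} g(x, y*(x))`
    (T : H₁ → H₁ →L[ℝ] H₂)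
    (hT : ∀ x : H₁, T x = (Hinv x).comp (hessyx g x (ystar x))) :
    (∀ x : H₁, ‖T x‖ ≤ L / μ) ∧
      ∀ x₁ x₂ : H₁,
        ‖T x₁ - T x₂‖ ≤ (L ^ 2 * ρ / μ ^ 3 + 2 * L * ρ / μ ^ 2 + ρ / μ) * ‖x₁ - x₂‖ :=
  statement3_general g μ L ρ hμ hL hρ hg hpos hyxbd hlipx hyyLx hyyLy hyxLx hyxLy ystar hstat Hinv
    hHinv1 hHinv2 T hT
end

section
/- In the Euclidean bilevel setting with the Lipschitz-and-boundedness assumptions, define the approximate hypergradient map Ḡ(x,y) := ∇ₓ f(x,y) − ∇²_{xy} g(x,y)[(∇²_{yy} g(x,y))⁻¹ ∇_y f(x,y)]. Then for every x ∈ H₁ and all y₁, y₂ ∈ H₂, ‖Ḡ(x,y₁) − Ḡ(x,y₂)‖ ≤ (L + ρM/μ + L²/μ + LMρ/μ²)‖y₁ − y₂‖. Consequently, since ∇F(x) = Ḡ(x, y*(x)), the Hessian-inverse hypergradient estimate Ĝ_hinv F(x) := Ḡ(x, ŷ) satisfies ‖Ĝ_hinv F(x) − ∇F(x)‖ ≤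 (L + κ_ρ M + κ_l L + κ_l κ_ρ M)‖ŷ − y*(x)‖ for every ŷ ∈ H₂, where κ_l := L/μ and κ_ρ := ρ/μ. -/
open scoped RealInnerProductSpace

variable {H₁ : Type*} [NormedAddCommGroup H₁] [InnerProductSpace ℝ H₁] [FiniteDimensional ℝ H₁]
variable {H₂ : Type*} [NormedAddCommGroup H₂] [InnerProductSpace ℝ H₂] [FiniteDimensional ℝ H₂]

/-!
Write `Ḡ(x,y₁) - Ḡ(x,y₂)` as the difference of the `∇ₓ f` terms minus the difference of the
triple products `A (B v)` with `A = ∇²_{xy} g`, `B = (∇²_{yy} g)⁻¹`, `v = ∇_y f`, and telescope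
the latter. Every factor is bounded and Lipschitz in `y`: `‖A‖ ≤ L` because `A` is the adjoint of
the derivative of the `L`-Lipschitz map `x ↦ ∇_y g(x,y)`, `‖B‖ ≤ 1/μ` by strong convexity, and the
resolvent identity `B₁ - B₂ = B₁ (K₂ - K₁) B₂` for `K = ∇²_{yy} g` makes `B` Lipschitz with
constant `ρ/μ²`.
The estimate at `ŷ` is the Lipschitz bound at `y₂ = y*(x)`.
-/

open ContinuousLinearMap

theorem sub_eq_mul_sub_mul_of_mul_eq_one {R : Type*} [Ring R] {a₁ a₂ b₁ b₂ : R}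
    (h₁ : a₁ * b₁ = 1) (h₂ : b₂ * a₂ = 1) : a₁ - a₂ = a₁ * (b₂ - b₁) * a₂ := by
  rw [mul_sub, sub_mul, mul_assoc, h₂, h₁, mul_one, one_mul]

theorem norm_sub_le_of_mul_eq_one {R : Type*} [NormedRing R] {a₁ a₂ b₁ b₂ : R}
    (h₁ : a₁ * b₁ = 1) (h₂ : b₂ * a₂ = 1) : ‖a₁ - a₂‖ ≤ ‖a₁‖ * ‖b₁ - b₂‖ * ‖a₂‖ := by
  rw [sub_eq_mul_sub_mul_of_mul_eq_one h₁ h₂, ← norm_neg (b₁ - b₂), neg_sub]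
  exact norm_mul₃_le

theorem ContinuousLinearMap.norm_le_inv_of_coercive_of_comp_eq_id {E : Type*}
    [NormedAddCommGroup E] [InnerProductSpace ℝ E] {μ : ℝ} (hμ : 0 < μ) {T S : E →L[ℝ] E}
    (hT : ∀ v, μ * ‖v‖ ^ 2 ≤ ⟪T v, v⟫) (hTS : T.comp S = .id ℝ E) : ‖S‖ ≤ μ⁻¹ := by
  refine opNorm_le_bound _ (inv_nonneg.2 hμ.le) fun w => ?_
  have hw : T (S w) = w := congr($hTS w)
  have : μ * ‖S w‖ ^ 2 ≤ ‖w‖ * ‖S w‖ := by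
    simpa only [hw] using (hT (S w)).trans (real_inner_le_norm _ _)
  rw [inv_mul_eq_div, le_div_iff₀ hμ]
  rcases (norm_nonneg (S w)).eq_or_lt' with h0 | h0
  · simp [h0]
  · nlinarith

theorem norm_apply_apply_sub_apply_apply_le {𝕜 E F G : Type*} [NontriviallyNormedField 𝕜]
    [SeminormedAddCommGroup E] [SeminormedAddCommGroup F] [SeminormedAddCommGroup G]
    [NormedSpace 𝕜 E] [NormedSpace 𝕜 F] [NormedSpace 𝕜 G]
    {A₁ A₂ : F →L[𝕜] G} {B₁ B₂ : E →L[𝕜] F} {v₁ v₂ : E} {α β ν a b m : ℝ}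
    (hA : ‖A₁ - A₂‖ ≤ α) (hA₂ : ‖A₂‖ ≤ a) (hB : ‖B₁ - B₂‖ ≤ β) (hB₁ : ‖B₁‖ ≤ b)
    (hB₂ : ‖B₂‖ ≤ b) (hv : ‖v₁ - v₂‖ ≤ ν) (hv₁ : ‖v₁‖ ≤ m) :
    ‖A₁ (B₁ v₁) - A₂ (B₂ v₂)‖ ≤ α * b * m + a * β * m + a * b * ν := by
  have hsplit : A₁ (B₁ v₁) - A₂ (B₂ v₂) =
      (A₁ - A₂) (B₁ v₁) + A₂ ((B₁ - B₂) v₁) + A₂ (B₂ (v₁ - v₂)) := by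
    simp only [sub_apply, map_sub]
    abel
  have hα : 0 ≤ α := (norm_nonneg _).trans hA
  have ha : 0 ≤ a := (norm_nonneg _).trans hA₂
  have hβ : 0 ≤ β := (norm_nonneg _).trans hB
  have hb : 0 ≤ b := (norm_nonneg _).trans hB₁
  rw [hsplit, mul_assoc α, mul_assoc a β, mul_assoc a b]
  refine (norm_add₃_le ..).trans (add_le_add_three ?_ ?_ ?_)
  all_goals exact (le_opNorm_of_le _ (le_opNorm _ _)).trans (by gcongr)

theorem norm_hessxy_le {g : H₁ → H₂ → ℝ} {L : ℝ} (hL : 0 ≤ L) {y : H₂}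
    (hg : ∀ x₁ x₂ : H₁, ‖grady g x₁ y - grady g x₂ y‖ ≤ L * ‖x₁ - x₂‖) (x : H₁) :
    ‖hessxy g x y‖ ≤ L := by
  rw [hessxy, LinearIsometryEquiv.norm_map]
  exact norm_fderiv_le_of_lip' ℝ hL (.of_forall fun x' => hg x' x)

theorem statement5_general
    (f g : H₁ → H₂ → ℝ) (μ L ρ M : ℝ)
    (hμ : 0 < μ) (hL : 0 ≤ L)
    -- bounded gradients of `f`
    (hfybd : ∀ (x : H₁) (y : H₂), ‖grady f x y‖ ≤ M)
    -- `∇ₓ f` and `∇_y f` are `L`-Lipschitz in each variable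
    (hfxLy : ∀ (x : H₁) (y₁ y₂ : H₂), ‖gradx f x y₁ - gradx f x y₂‖ ≤ L * ‖y₁ - y₂‖)
    (hfyLy : ∀ (x : H₁) (y₁ y₂ : H₂), ‖grady f x y₁ - grady f x y₂‖ ≤ L * ‖y₁ - y₂‖)
    -- `∇ₓ g` and `∇_y g` are `L`-Lipschitz in each variable
    (hgyLx : ∀ (y : H₂) (x₁ x₂ : H₁), ‖grady g x₁ y - grady g x₂ y‖ ≤ L * ‖x₁ - x₂‖)
    -- `∇²_{yy} g` and `∇²_{xy} g` are `ρ`-Lipschitz in operator norm in each variable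
    (hyyLy : ∀ (x : H₁) (y₁ y₂ : H₂), ‖hessyy g x y₁ - hessyy g x y₂‖ ≤ ρ * ‖y₁ - y₂‖)
    (hxyLy : ∀ (x : H₁) (y₁ y₂ : H₂), ‖hessxy g x y₁ - hessxy g x y₂‖ ≤ ρ * ‖y₁ - y₂‖)
    -- `∇²_{yy} g(x,y) ⪰ μ · id` for all `(x,y)`
    (hpos : ∀ (x : H₁) (y v : H₂), μ * ‖v‖ ^ 2 ≤ ⟪hessyy g x y v, v⟫)
    -- `y*(x)` is the (unique) minimizer of `g(x, ·)`, characterized by `∇_y g(x, y*(x)) = 0`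
    (ystar : H₁ → H₂)
    -- `Hinv x y` is the inverse of `∇²_{yy} g(x,y)`
    (Hinv : H₁ → H₂ → H₂ →L[ℝ] H₂)
    (hHinv1 : ∀ (x : H₁) (y : H₂),
      (Hinv x y).comp (hessyy g x y) = ContinuousLinearMap.id ℝ H₂)
    (hHinv2 : ∀ (x : H₁) (y : H₂),
      (hessyy g x y).comp (Hinv x y) = ContinuousLinearMap.id ℝ H₂)
    -- the approximate hypergradient map `Ḡ`
    (Gbar : H₁ → H₂ → H₁)
    (hGbar : ∀ (x : H₁) (y : H₂),
      Gbar x y = gradx f x y - hessxy g x y (Hinv x y (grady f x y))) :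
    (∀ (x : H₁) (y₁ y₂ : H₂),
      ‖Gbar x y₁ - Gbar x y₂‖ ≤
        (L + ρ * M / μ + L ^ 2 / μ + L * M * ρ / μ ^ 2) * ‖y₁ - y₂‖) ∧
      ∀ (x : H₁) (yhat : H₂),
        ‖Gbar x yhat - Gbar x (ystar x)‖ ≤
          (L + ρ / μ * M + L / μ * L + L / μ * (ρ / μ) * M) * ‖yhat - ystar x‖ := by
  have hxy_le : ∀ x y, ‖hessxy g x y‖ ≤ L := fun x y => norm_hessxy_le hL (hgyLx y) x
  have hinv_le : ∀ x y, ‖Hinv x y‖ ≤ μ⁻¹ := fun x y =>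
    norm_le_inv_of_coercive_of_comp_eq_id hμ (hpos x y) (hHinv2 x y)
  have hinv_sub_le : ∀ x y₁ y₂, ‖Hinv x y₁ - Hinv x y₂‖ ≤ μ⁻¹ * (ρ * ‖y₁ - y₂‖) * μ⁻¹ := fun x y₁ y₂ =>
    (norm_sub_le_of_mul_eq_one (hHinv1 x y₁) (hHinv2 x y₂)).trans <|
      mul_le_mul_of_nonneg (mul_le_mul (hinv_le x y₁) (hyyLy x y₁ y₂) (norm_nonneg _) (by positivity))
        (hinv_le x y₂) (by positivity) (by positivity)
  have lip : ∀ x y₁ y₂, ‖Gbar x y₁ - Gbar x y₂‖ ≤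
      (L + ρ * M / μ + L ^ 2 / μ + L * M * ρ / μ ^ 2) * ‖y₁ - y₂‖ := by
    intro x y₁ y₂
    calc ‖Gbar x y₁ - Gbar x y₂‖
        ≤ ‖gradx f x y₁ - gradx f x y₂‖ + ‖hessxy g x y₁ (Hinv x y₁ (grady f x y₁)) -
            hessxy g x y₂ (Hinv x y₂ (grady f x y₂))‖ := by
          rw [hGbar, hGbar, sub_sub_sub_comm]
          exact norm_sub_le _ _
      _ ≤ L * ‖y₁ - y₂‖ + (ρ * ‖y₁ - y₂‖ * μ⁻¹ * M + L * (μ⁻¹ * (ρ * ‖y₁ - y₂‖) * μ⁻¹) * M +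
            L * μ⁻¹ * (L * ‖y₁ - y₂‖)) :=
          add_le_add (hfxLy x y₁ y₂) <| norm_apply_apply_sub_apply_apply_le (hxyLy x y₁ y₂)
            (hxy_le x y₂) (hinv_sub_le x y₁ y₂) (hinv_le x y₁) (hinv_le x y₂) (hfyLy x y₁ y₂) (hfybd x y₁)
      _ = _ := by field_simp; ring
  refine ⟨lip, fun x yhat => ?_⟩
  convert lip x yhat (ystar x) using 2
  field_simp

/-- With `Ḡ(x,y) := ∇ₓ f(x,y) − ∇²_{xy} g(x,y)[(∇²_{yy} g(x,y))⁻¹ ∇_y f(x,y)]`,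
for every `x` and all `y₁, y₂`: `‖Ḡ(x,y₁) − Ḡ(x,y₂)‖ ≤ (L + ρM/μ + L²/μ + LMρ/μ²)‖y₁ − y₂‖`.
Consequently, since `∇F(x) = Ḡ(x, y*(x))`, the Hessian-inverse hypergradient estimate
`Ĝ_hinv F(x) := Ḡ(x, ŷ)` satisfies
`‖Ĝ_hinv F(x) − ∇F(x)‖ ≤ (L + κ_ρ M + κ_l L + κ_l κ_ρ M)‖ŷ − y*(x)‖`,
where `κ_l := L/μ` and `κ_ρ := ρ/μ`. -/
theorem statement5
    (f g : H₁ → H₂ → ℝ) (μ L ρ M : ℝ)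
    (hμ : 0 < μ) (hL : 0 ≤ L) (hρ : 0 ≤ ρ) (hM : 0 ≤ M)
    (hf : ContDiff ℝ 2 fun p : H₁ × H₂ => f p.1 p.2)
    (hg : ContDiff ℝ 2 fun p : H₁ × H₂ => g p.1 p.2)
    -- bounded gradients of `f`
    (hfxbd : ∀ (x : H₁) (y : H₂), ‖gradx f x y‖ ≤ M)
    (hfybd : ∀ (x : H₁) (y : H₂), ‖grady f x y‖ ≤ M)
    -- `∇ₓ f` and `∇_y f` are `L`-Lipschitz in each variable
    (hfxLx : ∀ (y : H₂) (x₁ x₂ : H₁), ‖gradx f x₁ y - gradx f x₂ y‖ ≤ L * ‖x₁ - x₂‖)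
    (hfxLy : ∀ (x : H₁) (y₁ y₂ : H₂), ‖gradx f x y₁ - gradx f x y₂‖ ≤ L * ‖y₁ - y₂‖)
    (hfyLx : ∀ (y : H₂) (x₁ x₂ : H₁), ‖grady f x₁ y - grady f x₂ y‖ ≤ L * ‖x₁ - x₂‖)
    (hfyLy : ∀ (x : H₁) (y₁ y₂ : H₂), ‖grady f x y₁ - grady f x y₂‖ ≤ L * ‖y₁ - y₂‖)
    -- `∇ₓ g` and `∇_y g` are `L`-Lipschitz in each variable
    (hgxLx : ∀ (y : H₂) (x₁ x₂ : H₁), ‖gradx g x₁ y - gradx g x₂ y‖ ≤ L * ‖x₁ - x₂‖)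
    (hgxLy : ∀ (x : H₁) (y₁ y₂ : H₂), ‖gradx g x y₁ - gradx g x y₂‖ ≤ L * ‖y₁ - y₂‖)
    (hgyLx : ∀ (y : H₂) (x₁ x₂ : H₁), ‖grady g x₁ y - grady g x₂ y‖ ≤ L * ‖x₁ - x₂‖)
    (hgyLy : ∀ (x : H₁) (y₁ y₂ : H₂), ‖grady g x y₁ - grady g x y₂‖ ≤ L * ‖y₁ - y₂‖)
    -- `∇²_{yy} g` and `∇²_{xy} g` are `ρ`-Lipschitz in operator norm in each variable
    (hyyLx : ∀ (y : H₂) (x₁ x₂ : H₁), ‖hessyy g x₁ y - hessyy g x₂ y‖ ≤ ρ * ‖x₁ - x₂‖)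
    (hyyLy : ∀ (x : H₁) (y₁ y₂ : H₂), ‖hessyy g x y₁ - hessyy g x y₂‖ ≤ ρ * ‖y₁ - y₂‖)
    (hxyLx : ∀ (y : H₂) (x₁ x₂ : H₁), ‖hessxy g x₁ y - hessxy g x₂ y‖ ≤ ρ * ‖x₁ - x₂‖)
    (hxyLy : ∀ (x : H₁) (y₁ y₂ : H₂), ‖hessxy g x y₁ - hessxy g x y₂‖ ≤ ρ * ‖y₁ - y₂‖)
    -- `∇²_{yy} g(x,y) ⪰ μ · id` for all `(x,y)`
    (hpos : ∀ (x : H₁) (y v : H₂), μ * ‖v‖ ^ 2 ≤ ⟪hessyy g x y v, v⟫)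
    -- `y*(x)` is the (unique) minimizer of `g(x, ·)`, characterized by `∇_y g(x, y*(x)) = 0`
    (ystar : H₁ → H₂)
    (hmin : ∀ (x : H₁) (z : H₂), g x (ystar x) ≤ g x z)
    (hstat : ∀ x : H₁, grady g x (ystar x) = 0)
    -- `Hinv x y` is the inverse of `∇²_{yy} g(x,y)`
    (Hinv : H₁ → H₂ → H₂ →L[ℝ] H₂)
    (hHinv1 : ∀ (x : H₁) (y : H₂),
      (Hinv x y).comp (hessyy g x y) = ContinuousLinearMap.id ℝ H₂)
    (hHinv2 : ∀ (x : H₁) (y : H₂),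
      (hessyy g x y).comp (Hinv x y) = ContinuousLinearMap.id ℝ H₂)
    -- the approximate hypergradient map `Ḡ`
    (Gbar : H₁ → H₂ → H₁)
    (hGbar : ∀ (x : H₁) (y : H₂),
      Gbar x y = gradx f x y - hessxy g x y (Hinv x y (grady f x y))) :
    (∀ (x : H₁) (y₁ y₂ : H₂),
      ‖Gbar x y₁ - Gbar x y₂‖ ≤
        (L + ρ * M / μ + L ^ 2 / μ + L * M * ρ / μ ^ 2) * ‖y₁ - y₂‖) ∧
      ∀ (x : H₁) (yhat : H₂),
        ‖Gbar x yhat - Gbar x (ystar x)‖ ≤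
          (L + ρ / μ * M + L / μ * L + L / μ * (ρ / μ) * M) * ‖yhat - ystar x‖ :=
  statement5_general f g μ L ρ M hμ hL hfybd hfxLy hfyLy hgyLx hyyLy hxyLy hpos ystar Hinv hHinv1
    hHinv2 Gbar hGbar
end

section
/- In the Euclidean bilevel setting with the Lipschitz-and-boundedness assumptions, fix x ∈ H₁ and let v* := (∇²_{yy} g(x, y*(x)))⁻¹ ∇_y f(x, y*(x)), so that ∇F(x) = ∇ₓ f(x, y*(x)) − ∇²_{xy} g(x, y*(x))[v*]. Then for every y ∈ H₂ and every v ∈ H₂, ‖(∇ₓ f(x,y) − ∇²_{xy} g(x,y)[v]) − ∇F(x)‖ ≤ (L + ρM/μ)‖y − y*(x)‖ + L‖v − v*‖. -/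
open scoped RealInnerProductSpace

variable {H₁ : Type*} [NormedAddCommGroup H₁] [InnerProductSpace ℝ H₁] [FiniteDimensional ℝ H₁]
variable {H₂ : Type*} [NormedAddCommGroup H₂] [InnerProductSpace ℝ H₂] [FiniteDimensional ℝ H₂]

/-- Fix `x` and let `v* := (∇²_{yy} g(x, y*(x)))⁻¹ ∇_y f(x, y*(x))`, so that
`∇F(x) = ∇ₓ f(x, y*(x)) − ∇²_{xy} g(x, y*(x))[v*]`. Then for every `y` and every `v`,
`‖(∇ₓ f(x,y) − ∇²_{xy} g(x,y)[v]) − ∇F(x)‖ ≤ (L + ρM/μ)‖y − y*(x)‖ + L‖v − v*‖`. -/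
theorem statement6
    (f g : H₁ → H₂ → ℝ) (μ L ρ M : ℝ)
    (hμ : 0 < μ) (hL : 0 ≤ L) (hρ : 0 ≤ ρ) (hM : 0 ≤ M)
    (hf : ContDiff ℝ 2 fun p : H₁ × H₂ => f p.1 p.2)
    (hg : ContDiff ℝ 2 fun p : H₁ × H₂ => g p.1 p.2)
    -- bounded gradients of `f`
    (hfxbd : ∀ (x : H₁) (y : H₂), ‖gradx f x y‖ ≤ M)
    (hfybd : ∀ (x : H₁) (y : H₂), ‖grady f x y‖ ≤ M)
    -- `∇ₓ f` and `∇_y f` are `L`-Lipschitz in each variable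
    (hfxLx : ∀ (y : H₂) (x₁ x₂ : H₁), ‖gradx f x₁ y - gradx f x₂ y‖ ≤ L * ‖x₁ - x₂‖)
    (hfxLy : ∀ (x : H₁) (y₁ y₂ : H₂), ‖gradx f x y₁ - gradx f x y₂‖ ≤ L * ‖y₁ - y₂‖)
    (hfyLx : ∀ (y : H₂) (x₁ x₂ : H₁), ‖grady f x₁ y - grady f x₂ y‖ ≤ L * ‖x₁ - x₂‖)
    (hfyLy : ∀ (x : H₁) (y₁ y₂ : H₂), ‖grady f x y₁ - grady f x y₂‖ ≤ L * ‖y₁ - y₂‖)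
    -- `‖∇²_{xy} g(x,y)‖ ≤ L` for all `(x,y)`
    (hxybd : ∀ (x : H₁) (y : H₂), ‖hessxy g x y‖ ≤ L)
    -- `(x,y) ↦ ∇²_{xy} g(x,y)` is `ρ`-Lipschitz in operator norm in each variable
    (hxyLx : ∀ (y : H₂) (x₁ x₂ : H₁), ‖hessxy g x₁ y - hessxy g x₂ y‖ ≤ ρ * ‖x₁ - x₂‖)
    (hxyLy : ∀ (x : H₁) (y₁ y₂ : H₂), ‖hessxy g x y₁ - hessxy g x y₂‖ ≤ ρ * ‖y₁ - y₂‖)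
    -- `∇²_{yy} g(x,y) ⪰ μ · id` for all `(x,y)`
    (hpos : ∀ (x : H₁) (y v : H₂), μ * ‖v‖ ^ 2 ≤ ⟪hessyy g x y v, v⟫)
    -- `y*(x)` is the (unique) minimizer of `g(x, ·)`, characterized by `∇_y g(x, y*(x)) = 0`
    (ystar : H₁ → H₂)
    (hmin : ∀ (x : H₁) (z : H₂), g x (ystar x) ≤ g x z)
    (hstat : ∀ x : H₁, grady g x (ystar x) = 0)
    -- fix `x`; `Hinv` is the inverse of `∇²_{yy} g(x, y*(x))`
    (x : H₁) (Hinv : H₂ →L[ℝ] H₂)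
    (hHinv1 : Hinv.comp (hessyy g x (ystar x)) = ContinuousLinearMap.id ℝ H₂)
    (hHinv2 : (hessyy g x (ystar x)).comp Hinv = ContinuousLinearMap.id ℝ H₂)
    -- `v* := (∇²_{yy} g(x, y*(x)))⁻¹ ∇_y f(x, y*(x))` and the true hypergradient `∇F(x)`
    (vstar : H₂) (hvstar : vstar = Hinv (grady f x (ystar x)))
    (GFx : H₁) (hGFx : GFx = gradx f x (ystar x) - hessxy g x (ystar x) vstar) :
    ∀ (y : H₂) (v : H₂),
      ‖(gradx f x y - hessxy g x y v) - GFx‖ ≤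
        (L + ρ * M / μ) * ‖y - ystar x‖ + L * ‖v - vstar‖ := by
  intro y v
  have hvs : ‖vstar‖ ≤ M / μ := by
    have h2 : hessyy g x (ystar x) vstar = grady f x (ystar x) := by
      have := congrArg (fun T : H₂ →L[ℝ] H₂ => T (grady f x (ystar x))) hHinv2
      simpa [ContinuousLinearMap.comp_apply, hvstar] using this
    have h1 := hpos x (ystar x) vstar
    have h3 : ⟪hessyy g x (ystar x) vstar, vstar⟫ ≤ M * ‖vstar‖ := by
      rw [h2]
      calc ⟪grady f x (ystar x), vstar⟫ ≤ ‖grady f x (ystar x)‖ * ‖vstar‖ :=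
            real_inner_le_norm _ _
        _ ≤ M * ‖vstar‖ := by
            exact mul_le_mul_of_nonneg_right (hfybd x _) (norm_nonneg _)
    rw [le_div_iff₀ hμ]
    rcases eq_or_lt_of_le (norm_nonneg vstar) with h0 | h0
    · rw [← h0]; simpa using hM
    · nlinarith
  have key : (gradx f x y - hessxy g x y v) - GFx
      = (gradx f x y - gradx f x (ystar x)) - (hessxy g x y) (v - vstar)
        - (hessxy g x y - hessxy g x (ystar x)) vstar := by
    rw [hGFx]
    simp only [map_sub, ContinuousLinearMap.sub_apply]
    abel
  rw [key]
  have hb1 : ‖gradx f x y - gradx f x (ystar x)‖ ≤ L * ‖y - ystar x‖ := hfxLy x y (ystar x)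
  have hb2 : ‖(hessxy g x y) (v - vstar)‖ ≤ L * ‖v - vstar‖ := by
    calc ‖(hessxy g x y) (v - vstar)‖ ≤ ‖hessxy g x y‖ * ‖v - vstar‖ :=
          (hessxy g x y).le_opNorm _
      _ ≤ L * ‖v - vstar‖ := mul_le_mul_of_nonneg_right (hxybd x y) (norm_nonneg _)
  have hb3 : ‖(hessxy g x y - hessxy g x (ystar x)) vstar‖ ≤ (ρ * ‖y - ystar x‖) * (M / μ) := by
    calc ‖(hessxy g x y - hessxy g x (ystar x)) vstar‖
        ≤ ‖hessxy g x y - hessxy g x (ystar x)‖ * ‖vstar‖ :=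
          (hessxy g x y - hessxy g x (ystar x)).le_opNorm _
      _ ≤ (ρ * ‖y - ystar x‖) * (M / μ) := by
          apply mul_le_mul (hxyLy x y (ystar x)) hvs (norm_nonneg _)
          positivity
  calc ‖(gradx f x y - gradx f x (ystar x)) - (hessxy g x y) (v - vstar)
        - (hessxy g x y - hessxy g x (ystar x)) vstar‖
      ≤ ‖(gradx f x y - gradx f x (ystar x)) - (hessxy g x y) (v - vstar)‖
        + ‖(hessxy g x y - hessxy g x (ystar x)) vstar‖ := norm_sub_le _ _
    _ ≤ ‖gradx f x y - gradx f x (ystar x)‖ + ‖(hessxy g x y) (v - vstar)‖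
        + ‖(hessxy g x y - hessxy g x (ystar x)) vstar‖ := by
          gcongr; exact norm_sub_le _ _
    _ ≤ (L * ‖y - ystar x‖) + (L * ‖v - vstar‖) + (ρ * ‖y - ystar x‖) * (M / μ) := by
          gcongr
    _ = (L + ρ * M / μ) * ‖y - ystar x‖ + L * ‖v - vstar‖ := by ring
end

section
/- Let A, B, M be real symmetric positive definite d×d matrices and U a real symmetric d×d matrix. Let λ_{a,−} and λ_{b,−} denote the smallest eigenvalues of A and B respectively, and suppose λ_−·I ⪯ M ⪯ λ_+·I with λ_−, λ_+ > 0. Then (1/2)·tr( M⁻¹ U M⁻¹ (U A M + M A U + U M⁻¹ B + B M⁻¹ U) ) ≥ (λ_{a,−} λ_− + λ_{b,−} λ_− / λ_+²) · tr( M⁻¹ U M⁻¹ U ). -/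
/-!
Write `N = M⁻¹` and `P = U N U ⪰ 0`. By cyclicity of the trace the form equals
`tr (P A) + tr (N P N B)` and `‖U‖²_M = tr (P N)`. Pairing the Loewner bounds
`A ⪰ λ_{a,−} I`, `B ⪰ λ_{b,−} I`, `λ_− N ⪯ I` and `(λ_+ N)² ⪰ I` with the positive
semidefinite weights `P` and `N P N` gives
`tr (P A) ≥ λ_{a,−} tr P ≥ λ_{a,−} λ_− tr (P N)` and
`tr (N P N B) ≥ λ_{b,−} tr (P N²) ≥ λ_{b,−} λ_+⁻² tr P ≥ λ_{b,−} λ_− λ_+⁻² tr (P N)`.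
-/

open Matrix
open scoped MatrixOrder

theorem one_le_mul_self_of_one_le {R : Type*} [Ring R] [PartialOrder R] [StarRing R]
    [StarOrderedRing R] {x : R} (h : 1 ≤ x) : 1 ≤ x * x := by
  have hx : 0 ≤ x - 1 := sub_nonneg.2 h
  have key : x * x - 1 = (x - 1) * (x - 1) + (x - 1) + (x - 1) := by noncomm_ring
  rw [← sub_nonneg, key]
  exact add_nonneg (add_nonneg (IsSelfAdjoint.of_nonneg hx).mul_self_nonneg hx) hx

namespace Matrix

variable {n : Type*} [Fintype n] [DecidableEq n]

lemma trace_mul_nonneg {P Q : Matrix n n ℝ} (hP : 0 ≤ P) (hQ : 0 ≤ Q) :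
    0 ≤ (P * Q).trace := by
  have h : (P * Q).trace = (CFC.sqrt P * Q * CFC.sqrt P).trace := by
    rw [trace_mul_cycle, CFC.sqrt_mul_sqrt_self P hP]
  rw [h]
  exact (nonneg_iff_posSemidef.1 (conjugate_nonneg_of_nonneg hQ (CFC.sqrt_nonneg P))).trace_nonneg

lemma trace_mul_le_trace_mul {P Q R : Matrix n n ℝ} (hP : 0 ≤ P) (hQR : Q ≤ R) :
    (P * Q).trace ≤ (P * R).trace := by
  have := trace_mul_nonneg hP (sub_nonneg.2 hQR)
  rwa [Matrix.mul_sub, trace_sub, sub_nonneg] at this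

lemma IsHermitian.iInf_eigenvalues_smul_one_le {A : Matrix n n ℝ} (hA : A.IsHermitian) :
    (⨅ i, hA.eigenvalues i) • (1 : Matrix n n ℝ) ≤ A := by
  rw [← Algebra.algebraMap_eq_smul_one, algebraMap_le_iff_le_spectrum hA.isSelfAdjoint,
    hA.spectrum_real_eq_range_eigenvalues]
  rintro _ ⟨i, rfl⟩
  exact ciInf_le (Finite.bddBelow_range _) i

lemma PosDef.exists_nonneg_conj_eq_one {M : Matrix n n ℝ} (hM : M.PosDef) :
    ∃ T, 0 ≤ T ∧ T * M * T = 1 ∧ T * T = M⁻¹ := by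
  set R := CFC.sqrt M
  have hRR : R * R = M := CFC.sqrt_mul_sqrt_self M hM.posSemidef.nonneg
  have hR : IsUnit R.det :=
    isUnit_of_mul_isUnit_left (by rw [← det_mul, hRR]; exact hM.isUnit.map detMonoidHom)
  refine ⟨R⁻¹, nonneg_iff_posSemidef.2 (nonneg_iff_posSemidef.1 (CFC.sqrt_nonneg M)).inv, ?_,
    by rw [← hRR, Matrix.mul_inv_rev]⟩
  rw [← hRR, ← Matrix.mul_assoc, nonsing_inv_mul _ hR, one_mul, mul_nonsing_inv _ hR]

lemma PosDef.smul_inv_le_one {M : Matrix n n ℝ} (hM : M.PosDef) {c : ℝ} (h : c • 1 ≤ M) :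
    c • M⁻¹ ≤ 1 := by
  obtain ⟨T, hT, hTMT, hTT⟩ := hM.exists_nonneg_conj_eq_one
  simpa [hTMT, hTT] using conjugate_le_conjugate_of_nonneg h hT

lemma PosDef.one_le_smul_inv {M : Matrix n n ℝ} (hM : M.PosDef) {c : ℝ} (h : M ≤ c • 1) :
    1 ≤ c • M⁻¹ := by
  obtain ⟨T, hT, hTMT, hTT⟩ := hM.exists_nonneg_conj_eq_one
  simpa [hTMT, hTT] using conjugate_le_conjugate_of_nonneg h hT

lemma trace_hessian_form (A B M U : Matrix n n ℝ) (hM : IsUnit M.det) :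
    (M⁻¹ * U * M⁻¹ * (U * A * M + M * A * U + U * M⁻¹ * B + B * M⁻¹ * U)).trace =
      2 * ((U * M⁻¹ * U * A).trace + (M⁻¹ * (U * M⁻¹ * U) * M⁻¹ * B).trace) := by
  have hMN : M * M⁻¹ = 1 := mul_nonsing_inv M hM
  have hNM : M⁻¹ * M = 1 := nonsing_inv_mul M hM
  have hUAM : (M⁻¹ * U * M⁻¹ * (U * A * M)).trace = (U * M⁻¹ * U * A).trace := by
    rw [← Matrix.mul_assoc, trace_mul_comm, ← Matrix.mul_assoc]
    simp only [← Matrix.mul_assoc, hMN, one_mul]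
  have hMAU : (M⁻¹ * U * M⁻¹ * (M * A * U)).trace = (U * M⁻¹ * U * A).trace := by
    simp only [Matrix.mul_assoc]
    rw [← Matrix.mul_assoc M⁻¹ M, hNM, one_mul, ← Matrix.mul_assoc, ← Matrix.mul_assoc,
      trace_mul_comm]
    simp only [Matrix.mul_assoc]
  have hBNU : (M⁻¹ * U * M⁻¹ * (B * M⁻¹ * U)).trace =
      (M⁻¹ * (U * M⁻¹ * U) * M⁻¹ * B).trace := by
    rw [show M⁻¹ * U * M⁻¹ * (B * M⁻¹ * U) = M⁻¹ * U * M⁻¹ * B * M⁻¹ * U by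
        simp only [Matrix.mul_assoc], trace_mul_comm,
      show U * (M⁻¹ * U * M⁻¹ * B * M⁻¹) = U * M⁻¹ * U * M⁻¹ * B * M⁻¹ by
        simp only [Matrix.mul_assoc], trace_mul_comm]
    simp only [Matrix.mul_assoc]
  simp only [Matrix.mul_add, trace_add, hUAM, hMAU, hBNU]
  simp only [Matrix.mul_assoc]
  ring

end Matrix

theorem statement17_general {d : ℕ} (A B M U : Matrix (Fin d) (Fin d) ℝ)
    (hA : A.PosDef) (hB : B.PosDef) (hM : M.PosDef) (hU : U.IsSymm)
    (lm lp : ℝ) (hlp : 0 < lp)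
    (hlow : (M - lm • (1 : Matrix (Fin d) (Fin d) ℝ)).PosSemidef)
    (hup : (lp • (1 : Matrix (Fin d) (Fin d) ℝ) - M).PosSemidef) :
    ((⨅ i, hA.1.eigenvalues i) * lm + (⨅ i, hB.1.eigenvalues i) * lm / lp ^ 2) *
        (M⁻¹ * U * M⁻¹ * U).trace ≤
      1 / 2 * (M⁻¹ * U * M⁻¹ * (U * A * M + M * A * U + U * M⁻¹ * B + B * M⁻¹ * U)).trace := by
  set ea := ⨅ i, hA.1.eigenvalues i
  set eb := ⨅ i, hB.1.eigenvalues i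
  set P := U * M⁻¹ * U
  have hea : 0 ≤ ea := Real.iInf_nonneg hA.posSemidef.eigenvalues_nonneg
  have heb : 0 ≤ eb := Real.iInf_nonneg hB.posSemidef.eigenvalues_nonneg
  have hN : 0 ≤ M⁻¹ := nonneg_iff_posSemidef.2 hM.posSemidef.inv
  have hP : 0 ≤ P := IsSelfAdjoint.conjugate_nonneg hN hU
  have hPA : ea * P.trace ≤ (P * A).trace := by
    simpa using trace_mul_le_trace_mul hP hA.1.iInf_eigenvalues_smul_one_le
  have hNPNB : eb * (P * (M⁻¹ * M⁻¹)).trace ≤ (M⁻¹ * P * M⁻¹ * B).trace := by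
    have := trace_mul_le_trace_mul (conjugate_nonneg_of_nonneg hP hN)
      hB.1.iInf_eigenvalues_smul_one_le
    rwa [Matrix.mul_smul, mul_one, trace_smul, trace_mul_cycle, trace_mul_comm] at this
  have hPN : lm * (P * M⁻¹).trace ≤ P.trace := by
    simpa using trace_mul_le_trace_mul hP (hM.smul_inv_le_one (le_iff.2 hlow))
  have hPNN : P.trace ≤ lp ^ 2 * (P * (M⁻¹ * M⁻¹)).trace := by
    simpa [smul_smul, sq] using
      trace_mul_le_trace_mul hP (one_le_mul_self_of_one_le (hM.one_le_smul_inv (le_iff.2 hup)))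
  have hPNN' : P.trace / lp ^ 2 ≤ (P * (M⁻¹ * M⁻¹)).trace :=
    (div_le_iff₀' (by positivity)).2 hPNN
  rw [trace_hessian_form A B M U hM.det_pos.ne'.isUnit, trace_mul_comm, ← Matrix.mul_assoc,
    ← Matrix.mul_assoc]
  calc (ea * lm + eb * lm / lp ^ 2) * (P * M⁻¹).trace
      = ea * (lm * (P * M⁻¹).trace) + eb * (lm * (P * M⁻¹).trace / lp ^ 2) := by ring
    _ ≤ ea * P.trace + eb * (P.trace / lp ^ 2) := by gcongr
    _ ≤ ea * P.trace + eb * (P * (M⁻¹ * M⁻¹)).trace := by gcongr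
    _ ≤ (P * A).trace + (M⁻¹ * P * M⁻¹ * B).trace := add_le_add hPA hNPNB
    _ = _ := by ring

/-- Let `A`, `B`, `M` be real symmetric positive definite `d×d` matrices and
`U` a real symmetric matrix. With `λ_{a,−}`, `λ_{b,−}` the smallest eigenvalues of `A`, `B`
and `λ_−·I ⪯ M ⪯ λ_+·I` (`λ_−, λ_+ > 0`),
`(1/2)·tr(M⁻¹UM⁻¹(UAM + MAU + UM⁻¹B + BM⁻¹U)) ≥ (λ_{a,−}λ_− + λ_{b,−}λ_−/λ_+²)·tr(M⁻¹UM⁻¹U)`. -/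
theorem statement17 {d : ℕ} (A B M U : Matrix (Fin d) (Fin d) ℝ)
    (hA : A.PosDef) (hB : B.PosDef) (hM : M.PosDef) (hU : U.IsSymm)
    (lm lp : ℝ) (hlm : 0 < lm) (hlp : 0 < lp)
    (hlow : (M - lm • (1 : Matrix (Fin d) (Fin d) ℝ)).PosSemidef)
    (hup : (lp • (1 : Matrix (Fin d) (Fin d) ℝ) - M).PosSemidef) :
    ((⨅ i, hA.1.eigenvalues i) * lm + (⨅ i, hB.1.eigenvalues i) * lm / lp ^ 2) *
        (M⁻¹ * U * M⁻¹ * U).trace ≤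
      1 / 2 * (M⁻¹ * U * M⁻¹ * (U * A * M + M * A * U + U * M⁻¹ * B + B * M⁻¹ * U)).trace :=
  statement17_general A B M U hA hB hM hU lm lp hlp hlow hup
end
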